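/- Let X = [0,1]^d with the Euclidean norm and β ∈ (0,∞). Let the nested designs X_n be generated by the boundary-phobic greedy algorithm: x_1 ∈ X is arbitrary and, for each n ≥ 1, x_{n+1} ∈ Argmax_{x∈X} D_β(x, X_n, X) where D_β(x, X_n, X) = min{ min_{x_i∈X_n} ‖x − x_i‖, β·d(x, ∂X) }. Then for all n ≥ 2, MR(X_n) ≤ 2·(1 + √d/β), CR(X_n) ≤ 2·(1 + √d/β)·CR*_n, and SR(X_n) ≥ SR*_n/(2·(1 + √d/β)). -/

import Mathlib

/-!
Let `v_k = D_β(x_k, X_k)` be the value of the `k`-th greedy step. Since the designs are nested,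
`v_k` is non-increasing, and any two points of `X_{m+1}` are at distance at least `v_m`; hence
`SR(X_{m+1}) ≥ v_m / 2`, and by pigeonhole (two of `x_0, …, x_n` share a nearest point of any
`n`-point design) `v_n ≤ 2 CR*_n`.

The geometric input is that pulling a point of the cube a fraction `t` of the way to its centre
moves it by at most `t √d / 2` and puts it at distance at least `t / 2` from the boundary.
Comparing the criterion at pulled points with the greedy maximum gives
`CR(X_n) ≤ (1 + √d/β) v_n` and, starting from a point of an optimal design far from `X_m`,
`SR*_{m+1} ≤ (1 + √d/β) v_m`. The three bounds follow by combining these with `v_{m+1} ≤ v_m`.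
-/

open Metric Set MeasureTheory

/-- Distance from a point `x` to the nearest point of the design `D`. -/
noncomputable def minDist {E : Type*} [NormedAddCommGroup E] (D : Finset E) (x : E) : ℝ :=
  sInf ((fun p => dist x p) '' (D : Set E))

/-- Fill distance (covering radius) of the design `D` for the set `A`:
`CR_A(D) = sup_{x ∈ A} min_{p ∈ D} ‖x - p‖`. -/
noncomputable def fillDist {E : Type*} [NormedAddCommGroup E] (A : Set E) (D : Finset E) : ℝ :=
  sSup ((fun x => minDist D x) '' A)

/-- Separation radius of the design `D`:
`SR(D) = (1/2) min_{p ≠ q ∈ D} ‖p - q‖`. -/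
noncomputable def sepRad {E : Type*} [NormedAddCommGroup E] (D : Finset E) : ℝ :=
  (1 / 2) * sInf ((fun p : E × E => dist p.1 p.2) '' {p | p.1 ∈ D ∧ p.2 ∈ D ∧ p.1 ≠ p.2})

/-- Mesh-ratio of the design `D` for the set `A`: `MR(D) = CR_A(D) / SR(D)`. -/
noncomputable def meshRatio {E : Type*} [NormedAddCommGroup E] (A : Set E) (D : Finset E) : ℝ :=
  fillDist A D / sepRad D

/-- The nested design consisting of the first `n` points of the sequence `x`. -/
noncomputable def design {E : Type*} (x : ℕ → E) (n : ℕ) : Finset E :=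
  letI := Classical.decEq E
  (Finset.range n).image x

section DesignGeometry

variable {E : Type*} [NormedAddCommGroup E]

theorem minDist_eq_infDist (D : Finset E) (y : E) : minDist D y = infDist y D := by
  rw [minDist, infDist_eq_iInf, sInf_image']

theorem exists_mem_minDist_eq_dist {D : Finset E} (hD : D.Nonempty) (y : E) :
    ∃ z ∈ D, minDist D y = dist y z := by
  simpa only [minDist_eq_infDist, Finset.mem_coe] using
    D.finite_toSet.isCompact.exists_infDist_eq_dist (Finset.coe_nonempty.2 hD) y

theorem minDist_le_dist {D : Finset E} {y z : E} (hz : z ∈ D) : minDist D y ≤ dist y z :=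
  (minDist_eq_infDist D y).trans_le (infDist_le_dist_of_mem (Finset.mem_coe.2 hz))

theorem minDist_anti {D D' : Finset E} (h : D ⊆ D') (hD : D.Nonempty) (y : E) :
    minDist D' y ≤ minDist D y := by
  simpa only [minDist_eq_infDist] using
    infDist_le_infDist_of_subset (Finset.coe_subset.2 h) (Finset.coe_nonempty.2 hD)

theorem minDist_le_fillDist {A : Set E} {D : Finset E} {y : E} (hA : Bornology.IsBounded A)
    (hD : D.Nonempty) (hy : y ∈ A) : minDist D y ≤ fillDist A D := by
  obtain ⟨p, hp⟩ := hD
  obtain ⟨R, hR⟩ := hA.subset_closedBall p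
  refine le_csSup ⟨R, ?_⟩ (mem_image_of_mem _ hy)
  rintro _ ⟨z, hz, rfl⟩
  show minDist D z ≤ R
  rw [minDist_eq_infDist]
  exact (infDist_le_dist_of_mem (Finset.mem_coe.2 hp)).trans (hR hz)

theorem fillDist_le {A : Set E} {D : Finset E} {c : ℝ} (hc : 0 ≤ c)
    (h : ∀ y ∈ A, minDist D y ≤ c) : fillDist A D ≤ c :=
  Real.sSup_le (by rintro _ ⟨y, hy, rfl⟩; exact h y hy) hc

theorem sepRad_nonneg (D : Finset E) : 0 ≤ sepRad D :=
  mul_nonneg (by norm_num) (Real.sInf_nonneg (by rintro _ ⟨_, -, rfl⟩; exact dist_nonneg))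

theorem sepRad_le_half_dist {D : Finset E} {p q : E} (hp : p ∈ D) (hq : q ∈ D) (hpq : p ≠ q) :
    sepRad D ≤ dist p q / 2 := by
  have : sInf ((fun p : E × E => dist p.1 p.2) '' {p | p.1 ∈ D ∧ p.2 ∈ D ∧ p.1 ≠ p.2}) ≤
      dist p q :=
    csInf_le ⟨0, by rintro _ ⟨_, -, rfl⟩; exact dist_nonneg⟩ ⟨(p, q), ⟨hp, hq, hpq⟩, rfl⟩
  rw [sepRad]
  linarith

theorem half_le_sepRad {D : Finset E} {r : ℝ} (hD : 1 < D.card)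
    (h : ∀ p ∈ D, ∀ q ∈ D, p ≠ q → r ≤ dist p q) : r / 2 ≤ sepRad D := by
  obtain ⟨p, hp, q, hq, hpq⟩ := Finset.one_lt_card.1 hD
  have : r ≤ sInf ((fun p : E × E => dist p.1 p.2) '' {p | p.1 ∈ D ∧ p.2 ∈ D ∧ p.1 ≠ p.2}) :=
    le_csInf ⟨_, (p, q), ⟨hp, hq, hpq⟩, rfl⟩ (by
      rintro _ ⟨⟨u, v⟩, ⟨hu, hv, huv⟩, rfl⟩
      exact h u hu v hv huv)
  rw [sepRad]
  linarith

theorem exists_ne_dist_le_two_mul_fillDist {A : Set E} {P D : Finset E}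
    (hA : Bornology.IsBounded A) (hPA : ↑P ⊆ A) (hD : D.Nonempty) (hcard : D.card < P.card) :
    ∃ p ∈ P, ∃ q ∈ P, p ≠ q ∧ dist p q ≤ 2 * fillDist A D := by
  choose z hzD hz using exists_mem_minDist_eq_dist hD
  obtain ⟨p, hp, q, hq, hpq, hzpq⟩ :=
    Finset.exists_ne_map_eq_of_card_lt_of_maps_to hcard fun p _ => hzD p
  refine ⟨p, hp, q, hq, hpq, ?_⟩
  have hzp := minDist_le_fillDist hA hD (hPA hp)
  have hzq := minDist_le_fillDist hA hD (hPA hq)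
  have htri : dist p q ≤ dist p (z p) + dist q (z q) := by
    rw [← hzpq]; exact dist_triangle_right p q (z p)
  rw [hz] at hzp hzq
  linarith

theorem exists_mem_sepRad_le_minDist {D D' : Finset E} (hD : D.Nonempty)
    (hcard : D.card < D'.card) : ∃ p ∈ D', sepRad D' ≤ minDist D p := by
  by_contra! hfar
  choose z hzD hz using exists_mem_minDist_eq_dist hD
  obtain ⟨p, hp, q, hq, hpq, hzpq⟩ :=
    Finset.exists_ne_map_eq_of_card_lt_of_maps_to hcard fun p _ => hzD p
  have hzp := hfar p hp
  have hzq := hfar q hq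
  have htri : dist p q ≤ dist p (z p) + dist q (z q) := by
    rw [← hzpq]; exact dist_triangle_right p q (z p)
  rw [hz] at hzp hzq
  linarith [sepRad_le_half_dist hp hq hpq]

end DesignGeometry

section NestedDesign

variable {E : Type*} {x : ℕ → E} {m n : ℕ}

theorem mem_design_iff {p : E} : p ∈ design x n ↔ ∃ i < n, x i = p := by
  simp [design]

theorem mem_design {i : ℕ} (h : i < n) : x i ∈ design x n :=
  mem_design_iff.2 ⟨i, h, rfl⟩

theorem card_design (hx : Function.Injective x) (n : ℕ) : (design x n).card = n := by
  classical
  rw [design, Finset.card_image_of_injective _ hx, Finset.card_range]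

theorem design_mono (h : m ≤ n) : design x m ⊆ design x n := fun _ hp =>
  let ⟨i, hi, hxi⟩ := mem_design_iff.1 hp
  mem_design_iff.2 ⟨i, hi.trans_le h, hxi⟩

theorem design_nonempty (h : 1 ≤ n) : (design x n).Nonempty :=
  ⟨x 0, mem_design h⟩

end NestedDesign

section PhobicGreedy

variable {E : Type*} [NormedAddCommGroup E]

-- `D_β(y, D, S)`.
noncomputable def phobicCrit (β : ℝ) (S : Set E) (D : Finset E) (y : E) : ℝ :=
  min (minDist D y) (β * infDist y (frontier S))

-- `x k` is the `(k + 1)`-th point, so `design x k` is the design it is added to.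
def IsPhobicGreedy (β : ℝ) (S : Set E) (x : ℕ → E) : Prop :=
  ∀ k, 1 ≤ k → x k ∈ S ∧
    ∀ y ∈ S, phobicCrit β S (design x k) y ≤ phobicCrit β S (design x k) (x k)

noncomputable def greedyValue (β : ℝ) (S : Set E) (x : ℕ → E) (k : ℕ) : ℝ :=
  phobicCrit β S (design x k) (x k)

variable {β : ℝ} {S : Set E} {x : ℕ → E} {m : ℕ}

theorem greedyValue_nonneg (hβ : 0 ≤ β) (k : ℕ) : 0 ≤ greedyValue β S x k :=
  le_min ((minDist_eq_infDist _ _).trans_ge infDist_nonneg) (mul_nonneg hβ infDist_nonneg)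

theorem greedyValue_le_dist {i j : ℕ} (hij : i < j) : greedyValue β S x j ≤ dist (x i) (x j) :=
  (min_le_left _ _).trans (dist_comm (x i) (x j) ▸ minDist_le_dist (mem_design hij))

namespace IsPhobicGreedy

theorem mem (hx : IsPhobicGreedy β S x) (hx0 : x 0 ∈ S) (k : ℕ) : x k ∈ S := by
  rcases Nat.eq_zero_or_pos k with rfl | hk
  exacts [hx0, (hx k hk).1]

theorem coe_design_subset (hx : IsPhobicGreedy β S x) (hx0 : x 0 ∈ S) (n : ℕ) :
    ↑(design x n) ⊆ S := fun _ hp =>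
  let ⟨i, _, hxi⟩ := mem_design_iff.1 hp
  hxi ▸ hx.mem hx0 i

theorem phobicCrit_le (hx : IsPhobicGreedy β S x) {k : ℕ} (hk : 1 ≤ k) {y : E} (hy : y ∈ S) :
    phobicCrit β S (design x k) y ≤ greedyValue β S x k :=
  (hx k hk).2 y hy

theorem antitoneOn (hx : IsPhobicGreedy β S x) : AntitoneOn (greedyValue β S x) (Ici 1) :=
  antitoneOn_nat_Ici_of_succ_le fun k hk =>
    calc greedyValue β S x (k + 1) ≤ phobicCrit β S (design x k) (x (k + 1)) :=
          min_le_min_right _ (minDist_anti (design_mono k.le_succ) (design_nonempty hk) _)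
      _ ≤ greedyValue β S x k := hx.phobicCrit_le hk (hx (k + 1) (Nat.le_add_left 1 k)).1

theorem greedyValue_le_dist_of_mem (hx : IsPhobicGreedy β S x) (hm : 1 ≤ m) {p q : E}
    (hp : p ∈ design x (m + 1)) (hq : q ∈ design x (m + 1)) (hpq : p ≠ q) :
    greedyValue β S x m ≤ dist p q := by
  obtain ⟨i, hi, rfl⟩ := mem_design_iff.1 hp
  obtain ⟨j, hj, rfl⟩ := mem_design_iff.1 hq
  have of_lt {i j : ℕ} (hij : i < j) (hj : j < m + 1) :
      greedyValue β S x m ≤ dist (x i) (x j) :=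
    (hx.antitoneOn (mem_Ici.2 (by omega)) (mem_Ici.2 hm) (by omega)).trans
      (greedyValue_le_dist hij)
  rcases lt_or_gt_of_ne (ne_of_apply_ne x hpq) with hij | hji
  · exact of_lt hij hj
  · exact dist_comm (x i) (x j) ▸ of_lt hji hi

theorem half_greedyValue_le_sepRad (hx : IsPhobicGreedy β S x) (hinj : Function.Injective x)
    (hm : 1 ≤ m) : greedyValue β S x m / 2 ≤ sepRad (design x (m + 1)) :=
  half_le_sepRad (by rw [card_design hinj]; omega) fun _ hp _ hq hpq =>
    hx.greedyValue_le_dist_of_mem hm hp hq hpq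

theorem greedyValue_le_two_mul_fillDist (hx : IsPhobicGreedy β S x)
    (hinj : Function.Injective x) (hx0 : x 0 ∈ S) (hS : Bornology.IsBounded S) (hm : 1 ≤ m)
    {D : Finset E} (hcard : D.card = m) :
    greedyValue β S x m ≤ 2 * fillDist S D := by
  obtain ⟨p, hp, q, hq, hpq, hdist⟩ :=
    exists_ne_dist_le_two_mul_fillDist (D := D) hS (hx.coe_design_subset hx0 (m + 1))
      (Finset.card_pos.1 (by omega)) (by rw [card_design hinj]; omega)
  exact (hx.greedyValue_le_dist_of_mem hm hp hq hpq).trans hdist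

end IsPhobicGreedy

end PhobicGreedy

theorem infDist_frontier_eq_infDist_compl {F : Type*} [NormedAddCommGroup F] [NormedSpace ℝ F]
    [FiniteDimensional ℝ F] {s : Set F} {y : F} (hy : y ∈ s) (hs : s ≠ univ) :
    infDist y (frontier s) = infDist y sᶜ := by
  obtain ⟨z, hz, hzd⟩ := exists_mem_frontier_infDist_compl_eq_dist hy hs
  refine le_antisymm (hzd ▸ infDist_le_dist_of_mem hz) ?_
  rw [← infDist_closure (s := sᶜ)]
  exact infDist_le_infDist_of_subset
    (frontier_eq_closure_inter_closure (s := s) ▸ inter_subset_right) ⟨z, hz⟩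

section UnitCube

variable {d : ℕ}

def unitCube (d : ℕ) : Set (EuclideanSpace ℝ (Fin d)) := {y | ∀ i, y i ∈ Icc (0 : ℝ) 1}

noncomputable def cubeCenter (d : ℕ) : EuclideanSpace ℝ (Fin d) := WithLp.toLp 2 fun _ => 1 / 2

theorem isClosed_unitCube : IsClosed (unitCube d) := by
  simp only [unitCube, ofPred_forall]
  exact isClosed_iInter fun i => isClosed_Icc.preimage (by fun_prop)

theorem unitCube_ne_univ (hd : 1 ≤ d) : unitCube d ≠ univ := fun h => by
  have := (h ▸ mem_univ (WithLp.toLp 2 fun _ => (2 : ℝ)) : _ ∈ unitCube d) ⟨0, hd⟩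
  norm_num at this

theorem dist_cubeCenter_le {y : EuclideanSpace ℝ (Fin d)} (hy : y ∈ unitCube d) :
    dist y (cubeCenter d) ≤ √d / 2 := by
  have hcoord (i : Fin d) : dist (y i) (cubeCenter d i) ^ 2 ≤ (1 / 2) ^ 2 := by
    obtain ⟨h0, h1⟩ := hy i
    rw [Real.dist_eq, sq_abs]
    simp only [cubeCenter]
    nlinarith
  calc dist y (cubeCenter d) ≤ √(∑ _i : Fin d, (1 / 2 : ℝ) ^ 2) := by
        rw [EuclideanSpace.dist_eq]
        exact Real.sqrt_le_sqrt (Finset.sum_le_sum fun i _ => hcoord i)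
    _ = √d / 2 := by simp [Real.sqrt_mul, div_eq_mul_inv]

theorem dist_le_sqrt_of_mem_unitCube {y z : EuclideanSpace ℝ (Fin d)} (hy : y ∈ unitCube d)
    (hz : z ∈ unitCube d) : dist y z ≤ √d := by
  linarith [dist_triangle_right y z (cubeCenter d), dist_cubeCenter_le hy, dist_cubeCenter_le hz]

theorem isBounded_unitCube : Bornology.IsBounded (unitCube d) :=
  isBounded_closedBall.subset fun _ hy => mem_closedBall.2 (dist_cubeCenter_le hy)

theorem closedBall_subset_unitCube_iff {y : EuclideanSpace ℝ (Fin d)} {r : ℝ} (hr : 0 ≤ r) :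
    closedBall y r ⊆ unitCube d ↔ ∀ i, r ≤ y i ∧ y i ≤ 1 - r := by
  constructor
  · intro h i
    have hmem (s : ℝ) (hs : |s| = r) : y + EuclideanSpace.single i s ∈ closedBall y r := by
      rw [mem_closedBall, dist_comm, dist_self_add_right, PiLp.norm_single,
        Real.norm_eq_abs, hs]
    have hlow := (h (hmem (-r) (by simp [abs_of_nonneg hr])) i).1
    have hupp := (h (hmem r (abs_of_nonneg hr)) i).2
    simp only [PiLp.add_apply, PiLp.single_apply, if_true] at hlow hupp
    constructor <;> linarith
  · intro h z hz i
    have := (abs_le.1 ((Real.dist_eq _ _).symm.trans_le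
      ((PiLp.dist_apply_le z y i).trans (mem_closedBall.1 hz))))
    constructor <;> linarith [h i]

theorem le_infDist_frontier_unitCube (hd : 1 ≤ d) {y : EuclideanSpace ℝ (Fin d)} {r : ℝ}
    (hr : 0 ≤ r) (h : closedBall y r ⊆ unitCube d) : r ≤ infDist y (frontier (unitCube d)) := by
  rw [infDist_frontier_eq_infDist_compl (h (mem_closedBall_self hr)) (unitCube_ne_univ hd),
    le_infDist (nonempty_compl.2 (unitCube_ne_univ hd))]
  exact fun z hz => le_of_not_gt fun hlt => hz (h (mem_closedBall'.2 hlt.le))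

theorem eq_cubeCenter_of_half_le_infDist (hd : 1 ≤ d) {y : EuclideanSpace ℝ (Fin d)}
    (hy : y ∈ unitCube d) (h : 1 / 2 ≤ infDist y (frontier (unitCube d))) : y = cubeCenter d := by
  rw [infDist_frontier_eq_infDist_compl hy (unitCube_ne_univ hd)] at h
  have hball : closedBall y (1 / 2) ⊆ unitCube d :=
    (closedBall_subset_closedBall h).trans
      ((closedBall_infDist_compl_subset_closure hy).trans isClosed_unitCube.closure_subset)
  ext i
  have := (closedBall_subset_unitCube_iff (by norm_num)).1 hball i
  simp only [cubeCenter]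
  linarith

-- The witness is `y` moved a fraction `t` of the way to the centre.
theorem exists_near_point_deep_in_unitCube (hd : 1 ≤ d) {y : EuclideanSpace ℝ (Fin d)}
    (hy : y ∈ unitCube d) {t : ℝ} (ht0 : 0 ≤ t) (ht1 : t ≤ 1) :
    ∃ y' ∈ unitCube d, dist y y' ≤ √d * (t / 2) ∧ t / 2 ≤ infDist y' (frontier (unitCube d)) := by
  set y' := y + t • (cubeCenter d - y)
  have hball : closedBall y' (t / 2) ⊆ unitCube d := by
    refine (closedBall_subset_unitCube_iff (by linarith)).2 fun i => ?_
    obtain ⟨h0, h1⟩ := hy i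
    simp only [y', cubeCenter, PiLp.add_apply, PiLp.smul_apply, PiLp.sub_apply, smul_eq_mul]
    constructor <;> nlinarith
  refine ⟨y', hball (mem_closedBall_self (by linarith)), ?_,
    le_infDist_frontier_unitCube hd (by linarith) hball⟩
  rw [dist_self_add_right, norm_smul, Real.norm_of_nonneg ht0, ← dist_eq_norm, dist_comm]
  nlinarith [dist_cubeCenter_le hy]

end UnitCube

namespace IsPhobicGreedy

variable {d : ℕ} {β : ℝ} {x : ℕ → EuclideanSpace ℝ (Fin d)} {m n : ℕ}

theorem min_sub_le_greedyValue (hd : 1 ≤ d) (hβ : 0 ≤ β) (hx : IsPhobicGreedy β (unitCube d) x)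
    (hn : 1 ≤ n) {y : EuclideanSpace ℝ (Fin d)} (hy : y ∈ unitCube d) {t : ℝ} (ht0 : 0 ≤ t)
    (ht1 : t ≤ 1) :
    min (minDist (design x n) y - √d * (t / 2)) (β * (t / 2)) ≤
      greedyValue β (unitCube d) x n := by
  obtain ⟨y', hy', hnear, hdeep⟩ := exists_near_point_deep_in_unitCube hd hy ht0 ht1
  refine le_trans (min_le_min ?_ (mul_le_mul_of_nonneg_left hdeep hβ)) (hx.phobicCrit_le hn hy')
  have := infDist_le_infDist_add_dist (x := y) (y := y') (s := ↑(design x n))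
  rw [← minDist_eq_infDist, ← minDist_eq_infDist] at this
  linarith

-- Only the centre lies at depth `1 / 2`, and the injective sequence can visit it only once.
theorem greedyValue_lt_half (hd : 1 ≤ d) (hβ : 0 < β) (hx : IsPhobicGreedy β (unitCube d) x)
    (hinj : Function.Injective x) (hn : 2 ≤ n) : greedyValue β (unitCube d) x n < β / 2 := by
  have eq_center {k : ℕ} (hk : 1 ≤ k) (hv : β / 2 ≤ greedyValue β (unitCube d) x k) :
      x k = cubeCenter d := by
    refine eq_cubeCenter_of_half_le_infDist hd (hx k hk).1 (le_of_mul_le_mul_left ?_ hβ)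
    linarith [hv.trans (min_le_right _ _)]
  by_contra! hv
  have h1 := eq_center le_rfl (hv.trans (hx.antitoneOn (mem_Ici.2 le_rfl)
    (mem_Ici.2 (by omega)) (by omega)))
  have := hinj (h1.trans (eq_center (by omega) hv).symm)
  omega

theorem minDist_le_mul_greedyValue (hd : 1 ≤ d) (hβ : 0 < β)
    (hx : IsPhobicGreedy β (unitCube d) x) (hinj : Function.Injective x) (hn : 2 ≤ n)
    {y : EuclideanSpace ℝ (Fin d)} (hy : y ∈ unitCube d) :
    minDist (design x n) y ≤ (1 + √d / β) * greedyValue β (unitCube d) x n := by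
  set v := greedyValue β (unitCube d) x n
  have hsd : 0 < √d := Real.sqrt_pos.2 (by exact_mod_cast hd)
  have hv : 2 * v / β < 1 := by
    rw [div_lt_one hβ]
    linarith [hx.greedyValue_lt_half hd hβ hinj hn]
  -- Pull `y` to depth just beyond `v / β`, so that the boundary term no longer binds.
  refine le_of_forall_pos_le_add fun ε hε => ?_
  set t := min 1 (2 * v / β + 2 * ε / √d)
  have hvt : 2 * v / β < t := lt_min hv (by linarith [div_pos (by linarith : (0 : ℝ) < 2 * ε) hsd])
  have hv0 : 0 ≤ v := greedyValue_nonneg hβ.le n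
  have ht0 : 0 ≤ t := (div_nonneg (by linarith) hβ.le).trans hvt.le
  have hcrit := hx.min_sub_le_greedyValue (n := n) hd hβ.le (by omega) hy ht0 (min_le_left _ _)
  have hdeep : v < β * (t / 2) := by
    rw [div_lt_iff₀ hβ] at hvt
    linarith
  have hnear : minDist (design x n) y - √d * (t / 2) ≤ v := by
    by_contra! h
    exact (lt_min h hdeep).not_ge hcrit
  have ht : t ≤ 2 * v / β + 2 * ε / √d := min_le_right _ _
  calc minDist (design x n) y ≤ v + √d * (t / 2) := by linarith
    _ ≤ v + √d * (v / β + ε / √d) := by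
        gcongr
        linarith [show 2 * v / β + 2 * ε / √d = 2 * (v / β + ε / √d) by ring]
    _ = (1 + √d / β) * v + ε := by field_simp; ring

theorem sepRad_le_mul_greedyValue (hd : 1 ≤ d) (hβ : 0 < β)
    (hx : IsPhobicGreedy β (unitCube d) x) (hinj : Function.Injective x) (hm : 1 ≤ m)
    {D : Finset (EuclideanSpace ℝ (Fin d))} (hD : ↑D ⊆ unitCube d) (hcard : D.card = m + 1) :
    sepRad D ≤ (1 + √d / β) * greedyValue β (unitCube d) x m := by
  set r := sepRad D
  obtain ⟨p, hp, hpr⟩ :=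
    exists_mem_sepRad_le_minDist (D' := D) (design_nonempty (x := x) hm) (by rw [card_design hinj]; omega)
  have hr : r ≤ √d / 2 := by
    obtain ⟨q, hq, q', hq', hqq'⟩ := Finset.one_lt_card.1 (by omega : 1 < D.card)
    linarith [sepRad_le_half_dist hq hq' hqq', dist_le_sqrt_of_mem_unitCube (hD hq) (hD hq')]
  have hK : 0 < β + √d := by positivity
  -- At `t = 2r / (β + √d)` both terms of the criterion at the pulled point are `≥ β t / 2`.
  set t := 2 * r / (β + √d) with ht
  have htr : (β + √d) * (t / 2) = r := by rw [ht]; field_simp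
  have hcrit := hx.min_sub_le_greedyValue hd hβ.le hm (hD hp) (t := t)
    (by have := sepRad_nonneg D; positivity) (by rw [div_le_one hK]; linarith [hβ])
  calc r = (1 + √d / β) * (β * (t / 2)) := by rw [← htr]; field_simp
    _ ≤ (1 + √d / β) * greedyValue β (unitCube d) x m := by
        gcongr
        exact (le_min (by linarith) le_rfl).trans hcrit

end IsPhobicGreedy

/-- Let `S = [0,1]^d` with the Euclidean norm and `β ∈ (0,∞)`. If the
nested designs `Xₙ` are generated by the boundary-phobic greedy algorithm (the `(k+1)`-th
point `x k ∈ S` maximizes over `S` the criterion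
`D_β(y) = min{min_{x_i ∈ X_k} ‖y − x_i‖, β·d(y, ∂S)}`), then for all `n ≥ 2`:
`MR(Xₙ) ≤ 2(1 + √d/β)`, `CR(Xₙ) ≤ 2(1 + √d/β)·CR*ₙ` and `SR(Xₙ) ≥ SR*ₙ/(2(1 + √d/β))`,
optimal values being expressed by quantification over all `n`-point designs `D'` in `S`. -/
theorem statement15 {d : ℕ} (hd : 1 ≤ d) (β : ℝ) (hβ : 0 < β)
    (S : Set (EuclideanSpace ℝ (Fin d)))
    (hScube : S = {y : EuclideanSpace ℝ (Fin d) | ∀ i, y i ∈ Set.Icc (0 : ℝ) 1})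
    (x : ℕ → EuclideanSpace ℝ (Fin d)) (hinj : Function.Injective x) (hx0 : x 0 ∈ S)
    (hphobic : ∀ k : ℕ, 1 ≤ k → x k ∈ S ∧ ∀ y ∈ S,
      min (minDist (design x k) y) (β * Metric.infDist y (frontier S)) ≤
        min (minDist (design x k) (x k)) (β * Metric.infDist (x k) (frontier S)))
    (n : ℕ) (hn : 2 ≤ n) :
    meshRatio S (design x n) ≤ 2 * (1 + Real.sqrt d / β) ∧
    (∀ D' : Finset (EuclideanSpace ℝ (Fin d)), ↑D' ⊆ S → D'.card = n →
        fillDist S (design x n) ≤ 2 * (1 + Real.sqrt d / β) * fillDist S D') ∧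
    (∀ D' : Finset (EuclideanSpace ℝ (Fin d)), ↑D' ⊆ S → D'.card = n →
        sepRad D' / (2 * (1 + Real.sqrt d / β)) ≤ sepRad (design x n)) := by
  obtain rfl : S = unitCube d := hScube
  have hx : IsPhobicGreedy β (unitCube d) x := hphobic
  obtain ⟨m, rfl⟩ : ∃ m, n = m + 1 := ⟨n - 1, by omega⟩
  have hm : 1 ≤ m := by omega
  have hm' : 1 ≤ m + 1 := by omega
  set γ := 1 + √d / β
  set v := greedyValue β (unitCube d) x
  have hγ : 0 < γ := by positivity
  have hfill : fillDist (unitCube d) (design x (m + 1)) ≤ γ * v (m + 1) :=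
    fillDist_le (mul_nonneg hγ.le (greedyValue_nonneg hβ.le _)) fun y hy =>
      hx.minDist_le_mul_greedyValue hd hβ hinj hn hy
  have hsep : v m / 2 ≤ sepRad (design x (m + 1)) := hx.half_greedyValue_le_sepRad hinj hm
  have hmono : v (m + 1) ≤ v m := hx.antitoneOn (mem_Ici.2 hm) (mem_Ici.2 hm') (by omega)
  refine ⟨?_, fun D hD hcard => ?_, fun D hD hcard => ?_⟩
  · rcases (sepRad_nonneg (design x (m + 1))).eq_or_lt with h0 | hpos
    · rw [meshRatio, ← h0, div_zero]
      positivity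
    · rw [meshRatio, div_le_iff₀ hpos]
      calc fillDist (unitCube d) (design x (m + 1)) ≤ γ * v m := hfill.trans (by gcongr)
        _ ≤ 2 * γ * sepRad (design x (m + 1)) := by nlinarith
  · calc fillDist (unitCube d) (design x (m + 1)) ≤ γ * v (m + 1) := hfill
      _ ≤ 2 * γ * fillDist (unitCube d) D := by
          nlinarith [hx.greedyValue_le_two_mul_fillDist hinj hx0 isBounded_unitCube hm' hcard]
  · rw [div_le_iff₀ (by positivity)]
    calc sepRad D ≤ γ * v m := hx.sepRad_le_mul_greedyValue hd hβ hinj hm hD hcard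
      _ ≤ sepRad (design x (m + 1)) * (2 * γ) := by nlinarith
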